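/- Let {S_f, P_v} be a Toeplitz–Cuntz–Krieger E-family on a Hilbert space H, and let v be a vertex. Then the closed two-sided ideal of C*(S,P) generated by P_v equals the closed linear span of {S_μ S_τ* : μ, τ paths with r(μ) = r(τ) ∈ H(v)}. -/

import Mathlib

/-!
Let `W` be the closed linear span of the monomials `S_μ S_τ*` with `r(μ) = r(τ) ∈ H(v)`. Each
such monomial factors as `(S_μ S_λ*) P_v (S_λ S_τ*)` for a path `λ` from `v` to `r(μ)`, so `W`
lies in the closed ideal generated by `P_v`. Conversely, the Toeplitz–Cuntz–Krieger relations
turn `S_f`, `S_f*` or `P_u` times a monomial into a monomial or `0` (multiplying by `S_f*` may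
extend `τ` by `f`, and `H(v)` is closed under following edges). Since `W` is `*`-closed, the
operators `a` with `aW ⊆ W` and `a*W ⊆ W` form a closed `*`-subalgebra containing the family,
hence all of `C*(S, P)`; so `W` is a closed two-sided ideal containing `P_v`.
-/

/-- `IsPathFrom r s v l` : the list of edges `l` is a (possibly empty) path starting at the
vertex `v`: consecutive edges are composable, and the first edge (if any) has source `v`.
The empty list represents the trivial path at `v`. -/
def IsPathFrom {V Ed : Type*} (r s : Ed → V) (v : V) (l : List Ed) : Prop :=
  l.Chain' (fun e f => r e = s f) ∧ ∀ e ∈ l.head?, s e = v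

/-- The range vertex of the path `(v, l)`: `v` if `l` is empty, and the range of the last
edge otherwise. -/
def pathEnd {V Ed : Type*} (r : Ed → V) (v : V) (l : List Ed) : V :=
  (l.getLast?).elim v r

/-- `S_μ` for the path `μ = (v, l)` : the product `S_{f₁} ⋯ S_{f_n}` of the edge operators,
and `P_v` for the trivial path at `v`. -/
def sPath {V Ed α : Type*} [Monoid α] (P : V → α) (S : Ed → α) (v : V) (l : List Ed) : α :=
  match l with
  | [] => P v
  | l => (l.map S).prod

/-- A Toeplitz–Cuntz–Krieger `E`-family on a Hilbert space `H`, for the directed graph with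
vertices `V`, edges `Ed` and range and source maps `r s : Ed → V`. -/
def IsTCKFamily {V Ed : Type*} {H : Type*} [NormedAddCommGroup H] [InnerProductSpace ℂ H]
    [CompleteSpace H] (r s : Ed → V) (P : V → (H →L[ℂ] H)) (S : Ed → (H →L[ℂ] H)) : Prop :=
  (∀ v, IsSelfAdjoint (P v)) ∧ (∀ v, IsIdempotentElem (P v)) ∧
  (∀ v w, v ≠ w → P v * P w = 0) ∧
  (∀ f, star (S f) * S f = P (r f)) ∧
  (∀ e f, e ≠ f → (S e * star (S e)) * (S f * star (S f)) = 0) ∧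
  (∀ (v : V) (F : Finset Ed), (∀ f ∈ F, s f = v) → (∑ f ∈ F, S f * star (S f)) ≤ P v)

theorem mul_star_mul_self_of_isIdempotentElem {A : Type*} [NonUnitalNormedRing A] [StarRing A]
    [CStarRing A] {a : A} (ha : IsIdempotentElem (star a * a)) : a * (star a * a) = a := by
  have hzero : star (a * (star a * a) - a) * (a * (star a * a) - a) = 0 := by
    have hexpand : star (a * (star a * a) - a) * (a * (star a * a) - a) =
        (star a * a) * (star a * a) * (star a * a) - (star a * a) * (star a * a)
          - (star a * a) * (star a * a) + star a * a := by
      simp only [star_sub, star_mul, star_star]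
      noncomm_ring
    rw [hexpand, ha.eq, ha.eq]
    abel
  exact sub_eq_zero.1 (CStarRing.star_mul_self_eq_zero_iff _ |>.1 hzero)

namespace TwoSidedIdeal

variable {R A : Type*} [Semiring R] [NonUnitalRing A] [Module R A] [IsScalarTower R A A]
  [SMulCommClass R A A]

-- A two-sided ideal of a non-unital algebra need not be closed under scalars; here
-- `c • p = (c • p) * p` makes `span {p}` so.
theorem smul_mem_span_singleton_of_isIdempotentElem {p : A} (hp : IsIdempotentElem p) (c : R)
    {x : A} (hx : x ∈ span {p}) : c • x ∈ span {p} := by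
  let I : TwoSidedIdeal A := .mk' {x | ∀ c : R, c • x ∈ span {p}}
    (fun c => by simp)
    (fun hx hy c => by simpa only [smul_add] using AddMemClass.add_mem (hx c) (hy c))
    (fun hx c => by simpa only [smul_neg] using NegMemClass.neg_mem (hx c))
    (fun {a _} hy c => by simpa only [mul_smul_comm] using mul_mem_left _ a _ (hy c))
    (fun {_ b} hx c => by simpa only [smul_mul_assoc] using mul_mem_right _ _ b (hx c))
  have hpI : {p} ⊆ (I : Set A) := by
    refine Set.singleton_subset_iff.2 ((mem_mk' ..).2 fun c => ?_)
    have hcp : c • p = (c • p) * p := by rw [smul_mul_assoc, hp.eq]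
    rw [hcp]
    exact mul_mem_left _ _ _ (subset_span (Set.mem_singleton p))
  exact (mem_mk' ..).1 (span_le.2 hpI hx) c

theorem span_submodule_subset_span_singleton {p : A} (hp : IsIdempotentElem p) {X : Set A}
    (hX : X ⊆ span {p}) : (Submodule.span R X : Set A) ⊆ span {p} := by
  intro x hx
  induction hx using Submodule.span_induction with
  | mem y hy => exact hX hy
  | zero => exact zero_mem _
  | add y z _ _ hy hz => exact AddMemClass.add_mem hy hz
  | smul c y _ hy => exact smul_mem_span_singleton_of_isIdempotentElem hp c hy

end TwoSidedIdeal

namespace Submodule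

variable {R B : Type*} [CommRing R] [StarRing R] [NonUnitalRing B] [StarRing B] [Module R B]
  [StarModule R B]

theorem star_mem_span {X : Set B} (hX : ∀ x ∈ X, star x ∈ X) {x : B} (hx : x ∈ span R X) :
    star x ∈ span R X := by
  induction hx using span_induction with
  | mem y hy => exact subset_span (hX y hy)
  | zero => simp
  | add y z _ _ hy hz => simpa using add_mem hy hz
  | smul c y _ hy => simpa using smul_mem _ (star c) hy

def starIdealizer [IsScalarTower R B B] (M : Submodule R B) : NonUnitalStarSubalgebra R B where
  carrier := {a | ∀ m ∈ M, a * m ∈ M ∧ star a * m ∈ M}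
  zero_mem' m _ := by simp
  add_mem' ha hb m hm := by
    simpa only [add_mul, star_add] using
      ⟨add_mem (ha m hm).1 (hb m hm).1, add_mem (ha m hm).2 (hb m hm).2⟩
  mul_mem' ha hb m hm := by
    simpa only [mul_assoc, star_mul] using
      ⟨(ha _ (hb m hm).1).1, (hb _ (ha m hm).2).2⟩
  smul_mem' c a ha m hm := by
    simpa only [smul_mul_assoc, star_smul] using
      ⟨smul_mem _ c (ha m hm).1, smul_mem _ (star c) (ha m hm).2⟩
  star_mem' ha m hm := by simpa only [star_star] using (ha m hm).symm

theorem mem_starIdealizer [IsScalarTower R B B] {M : Submodule R B} {a : B} :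
    a ∈ M.starIdealizer ↔ ∀ m ∈ M, a * m ∈ M ∧ star a * m ∈ M := Iff.rfl

theorem mem_starIdealizer_span [IsScalarTower R B B] [SMulCommClass R B B] {X : Set B} {a : B}
    (ha : ∀ x ∈ X, a * x ∈ span R X) (ha' : ∀ x ∈ X, star a * x ∈ span R X) :
    a ∈ (span R X).starIdealizer := by
  intro m hm
  induction hm using span_induction with
  | mem x hx => exact ⟨ha x hx, ha' x hx⟩
  | zero => simp
  | add y z _ _ hy hz => simpa only [mul_add] using ⟨add_mem hy.1 hz.1, add_mem hy.2 hz.2⟩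
  | smul c y _ hy => simpa only [mul_smul_comm] using ⟨smul_mem _ c hy.1, smul_mem _ c hy.2⟩

variable [TopologicalSpace B] [IsTopologicalRing B]

theorem star_mem_topologicalClosure_span [ContinuousConstSMul R B] [ContinuousStar B]
    {X : Set B} (hX : ∀ x ∈ X, star x ∈ X) {m : B} (hm : m ∈ (span R X).topologicalClosure) :
    star m ∈ (span R X).topologicalClosure := by
  rw [← SetLike.mem_coe, topologicalClosure_coe] at hm ⊢
  exact map_mem_closure continuous_star hm fun _ => star_mem_span hX

variable [IsScalarTower R B B]

theorem isClosed_starIdealizer [ContinuousStar B] {M : Submodule R B} (hM : IsClosed (M : Set B)) :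
    IsClosed (M.starIdealizer : Set B) := by
  have : (M.starIdealizer : Set B) =
      ⋂ m ∈ M, ((· * m) ⁻¹' M ∩ ((star · * m) ⁻¹' M)) := by
    ext a; simp [mem_starIdealizer]
  rw [this]
  exact isClosed_biInter fun m _ =>
    (hM.preimage (continuous_mul_const m)).inter
      (hM.preimage (continuous_star.mul continuous_const))

theorem starIdealizer_le_starIdealizer_topologicalClosure [ContinuousConstSMul R B]
    (M : Submodule R B) :
    M.starIdealizer ≤ M.topologicalClosure.starIdealizer := by
  intro a ha m hm
  rw [← SetLike.mem_coe, topologicalClosure_coe] at hm ⊢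
  exact ⟨map_mem_closure (continuous_const_mul a) hm fun x hx => (ha x hx).1,
    map_mem_closure (continuous_const_mul (star a)) hm fun x hx => (ha x hx).2⟩

end Submodule

namespace NonUnitalStarSubalgebra

variable {R B : Type*} [CommRing R] [NonUnitalRing B] [StarRing B] [Module R B]

theorem closure_span_preimage_val [TopologicalSpace B] (C : NonUnitalStarSubalgebra R B)
    {X : Set B} (hX : X ⊆ C) :
    closure (Submodule.span R (((↑) : C → B) ⁻¹' X) : Set C) =
      ((↑) : C → B) ⁻¹' closure (Submodule.span R X) := by
  have hmap := congrArg SetLike.coe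
    (Submodule.map_span C.toSubmodule.subtype (((↑) : C → B) ⁻¹' X))
  rw [Submodule.map_coe, Submodule.coe_subtype] at hmap
  rw [Topology.IsInducing.subtypeVal.closure_eq_preimage_closure_image]
  congr 2
  refine hmap.trans ?_
  congr 2
  exact Set.image_preimage_eq_of_subset (by simpa using hX)

theorem twoSidedIdealSpan_subset_preimage_val [StarRing R] [IsScalarTower R B B]
    [StarModule R B] {C : NonUnitalStarSubalgebra R B} {M : Submodule R B}
    (hM : ∀ m ∈ M, star m ∈ M) (hC : C ≤ M.starIdealizer) {s : Set C}
    (hs : ∀ p ∈ s, (p : B) ∈ M) :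
    (TwoSidedIdeal.span s : Set C) ⊆ ((↑) : C → B) ⁻¹' M := by
  let I : TwoSidedIdeal C := .mk' (((↑) : C → B) ⁻¹' M) (zero_mem M)
    (fun {x y} hx hy => (add_mem hx hy : ((x + y : C) : B) ∈ M))
    (fun {x} hx => (neg_mem hx : ((-x : C) : B) ∈ M))
    (fun {x _} hy => (hC x.2 _ hy).1)
    (fun {x y} hx => by
      have hyx := hM _ ((hC y.2 _ (hM _ hx)).2)
      rw [star_mul, star_star, star_star] at hyx
      exact hyx)
  have hsI : TwoSidedIdeal.span s ≤ I :=
    TwoSidedIdeal.span_le.2 fun p hp => (TwoSidedIdeal.mem_mk' ..).2 (hs p hp)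
  exact fun x hx => (TwoSidedIdeal.mem_mk' ..).1 (hsI hx)

end NonUnitalStarSubalgebra

section Paths

variable {V Ed : Type*} {r s : Ed → V}

theorem isPathFrom_nil (v : V) : IsPathFrom r s v [] := ⟨List.isChain_nil, by simp⟩

theorem isPathFrom_cons {w : V} {f : Ed} {l : List Ed} :
    IsPathFrom r s w (f :: l) ↔ s f = w ∧ IsPathFrom r s (r f) l := by
  constructor
  · rintro ⟨hc, hh⟩
    replace hc := List.isChain_cons.1 hc
    exact ⟨hh f rfl, hc.2, fun e he => (hc.1 e he).symm⟩
  · rintro ⟨hf, hc, hh⟩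
    refine ⟨List.isChain_cons.2 ⟨fun y hy => (hh y hy).symm, hc⟩, ?_⟩
    simpa using hf

theorem pathEnd_cons (w : V) (f : Ed) (l : List Ed) :
    pathEnd r w (f :: l) = pathEnd r (r f) l := by
  cases l with
  | nil => rfl
  | cons g t =>
    simp only [pathEnd, List.getLast?_cons_cons,
      List.getLast?_eq_some_getLast (l := g :: t) (by simp), Option.elim_some]

theorem pathEnd_append_singleton (w : V) (l : List Ed) (f : Ed) :
    pathEnd r w (l ++ [f]) = r f := by
  simp [pathEnd]

theorem IsPathFrom.append_singleton {w : V} {l : List Ed} {f : Ed} (hl : IsPathFrom r s w l)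
    (hf : pathEnd r w l = s f) : IsPathFrom r s w (l ++ [f]) := by
  induction l generalizing w with
  | nil => exact isPathFrom_cons.2 ⟨hf.symm, isPathFrom_nil _⟩
  | cons g t ih =>
    rw [isPathFrom_cons] at hl
    rw [pathEnd_cons] at hf
    exact isPathFrom_cons.2 ⟨hl.1, ih hl.2 hf⟩

-- `PathReachable r s v w` is `w ∈ H(v)`.
variable (r s) in
def PathReachable (v w : V) : Prop :=
  ∃ l : List Ed, IsPathFrom r s v l ∧ pathEnd r v l = w

theorem PathReachable.refl (v : V) : PathReachable r s v v := ⟨[], isPathFrom_nil v, rfl⟩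

theorem PathReachable.range {v : V} {f : Ed} (h : PathReachable r s v (s f)) :
    PathReachable r s v (r f) :=
  let ⟨l, hl, hend⟩ := h
  ⟨l ++ [f], hl.append_singleton hend, pathEnd_append_singleton v l f⟩

end Paths

section Monomials

variable {V Ed α : Type*} [Monoid α] [StarMul α] {r s : Ed → V} {P : V → α} {S : Ed → α}

variable (r s P S) in
def reachableMonomials (v : V) : Set α :=
  {x | ∃ (vμ : V) (lμ : List Ed) (vτ : V) (lτ : List Ed),
    IsPathFrom r s vμ lμ ∧ IsPathFrom r s vτ lτ ∧ pathEnd r vμ lμ = pathEnd r vτ lτ ∧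
    PathReachable r s v (pathEnd r vμ lμ) ∧ x = sPath P S vμ lμ * star (sPath P S vτ lτ)}

theorem star_mem_reachableMonomials {v : V} {x : α} (hx : x ∈ reachableMonomials r s P S v) :
    star x ∈ reachableMonomials r s P S v :=
  let ⟨vμ, lμ, vτ, lτ, hμ, hτ, hend, hreach, hx⟩ := hx
  ⟨vτ, lτ, vμ, lμ, hτ, hμ, hend.symm, hend ▸ hreach, by rw [hx, star_mul, star_star]⟩

end Monomials

namespace IsTCKFamily

variable {V Ed H : Type*} [NormedAddCommGroup H] [InnerProductSpace ℂ H] [CompleteSpace H]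
  {r s : Ed → V} {P : V → (H →L[ℂ] H)} {S : Ed → (H →L[ℂ] H)}

theorem star_P (h : IsTCKFamily r s P S) (v : V) : star (P v) = P v := h.1 v

theorem P_mul_P (h : IsTCKFamily r s P S) (v : V) : P v * P v = P v := h.2.1 v

theorem P_mul_P_of_ne (h : IsTCKFamily r s P S) {v w : V} (hvw : v ≠ w) : P v * P w = 0 :=
  h.2.2.1 v w hvw

theorem star_S_mul_S (h : IsTCKFamily r s P S) (f : Ed) : star (S f) * S f = P (r f) :=
  h.2.2.2.1 f

theorem S_mul_P (h : IsTCKFamily r s P S) (f : Ed) : S f * P (r f) = S f := by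
  rw [← h.star_S_mul_S]
  exact mul_star_mul_self_of_isIdempotentElem (by rw [IsIdempotentElem, h.star_S_mul_S, h.P_mul_P])

theorem P_mul_star_S (h : IsTCKFamily r s P S) (f : Ed) : P (r f) * star (S f) = star (S f) := by
  simpa only [star_mul, h.star_P _] using congrArg star (h.S_mul_P f)

theorem isStarProjection_S_mul_star_S (h : IsTCKFamily r s P S) (f : Ed) :
    IsStarProjection (S f * star (S f)) := by
  refine ⟨?_, IsSelfAdjoint.mul_star_self _⟩
  rw [IsIdempotentElem, mul_assoc, ← mul_assoc (star (S f)), h.star_S_mul_S, ← mul_assoc,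
    h.S_mul_P]

theorem P_mul_S (h : IsTCKFamily r s P S) (f : Ed) : P (s f) * S f = S f := by
  have hle : S f * star (S f) ≤ P (s f) := by simpa using h.2.2.2.2.2 (s f) {f} (by simp)
  have hrange : P (s f) * (S f * star (S f)) = S f * star (S f) :=
    (h.isStarProjection_S_mul_star_S f |>.le_iff_mul_eq_right ⟨h.P_mul_P _, h.star_P _⟩).1 hle
  calc P (s f) * S f = P (s f) * (S f * star (S f)) * S f := by
        rw [mul_assoc, mul_assoc, h.star_S_mul_S, h.S_mul_P]
    _ = S f := by rw [hrange, mul_assoc, h.star_S_mul_S, h.S_mul_P]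

theorem star_S_mul_P (h : IsTCKFamily r s P S) (f : Ed) : star (S f) * P (s f) = star (S f) := by
  simpa only [star_mul, h.star_P _] using congrArg star (h.P_mul_S f)

theorem P_mul_S_of_ne (h : IsTCKFamily r s P S) {u : V} {f : Ed} (hu : u ≠ s f) :
    P u * S f = 0 := by
  rw [← h.P_mul_S f, ← mul_assoc, h.P_mul_P_of_ne hu, zero_mul]

theorem star_S_mul_S_of_ne (h : IsTCKFamily r s P S) {e f : Ed} (hef : e ≠ f) :
    star (S e) * S f = 0 := by
  have hstar : star (S e) * (S e * star (S e)) = star (S e) := by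
    rw [← mul_assoc, h.star_S_mul_S, h.P_mul_star_S]
  calc star (S e) * S f
      = star (S e) * ((S e * star (S e)) * (S f * star (S f))) * S f := by
        rw [← mul_assoc, hstar, mul_assoc, mul_assoc, h.star_S_mul_S, h.S_mul_P]
    _ = 0 := by rw [h.2.2.2.2.1 e f hef, mul_zero, zero_mul]

theorem sPath_cons (h : IsTCKFamily r s P S) (w : V) (f : Ed) (l : List Ed) :
    sPath P S w (f :: l) = S f * sPath P S (r f) l := by
  cases l with
  | nil => simp [sPath, h.S_mul_P]
  | cons g t => simp [sPath]

theorem sPath_append_singleton (h : IsTCKFamily r s P S) {w : V} {l : List Ed} {f : Ed}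
    (hf : pathEnd r w l = s f) : sPath P S w (l ++ [f]) = sPath P S w l * S f := by
  induction l generalizing w with
  | nil =>
    obtain rfl : w = s f := hf
    simp [sPath, h.P_mul_S]
  | cons g t ih =>
    rw [pathEnd_cons] at hf
    rw [List.cons_append, h.sPath_cons, h.sPath_cons, ih hf, mul_assoc]

theorem P_mul_sPath (h : IsTCKFamily r s P S) {w : V} {l : List Ed}
    (hl : IsPathFrom r s w l) : P w * sPath P S w l = sPath P S w l := by
  cases l with
  | nil => exact h.P_mul_P w
  | cons f t =>
    obtain ⟨rfl, -⟩ := isPathFrom_cons.1 hl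
    rw [h.sPath_cons, ← mul_assoc, h.P_mul_S]

theorem P_mul_sPath_of_ne (h : IsTCKFamily r s P S) {u w : V} {l : List Ed}
    (hl : IsPathFrom r s w l) (hu : u ≠ w) : P u * sPath P S w l = 0 := by
  rw [← h.P_mul_sPath hl, ← mul_assoc, h.P_mul_P_of_ne hu, zero_mul]

theorem S_mul_sPath_of_ne (h : IsTCKFamily r s P S) {w : V} {l : List Ed} {f : Ed}
    (hl : IsPathFrom r s w l) (hf : r f ≠ w) : S f * sPath P S w l = 0 := by
  rw [← h.S_mul_P f, mul_assoc, h.P_mul_sPath_of_ne hl hf, mul_zero]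

theorem sPath_mul_P_pathEnd (h : IsTCKFamily r s P S) {w : V} {l : List Ed}
    (hl : IsPathFrom r s w l) : sPath P S w l * P (pathEnd r w l) = sPath P S w l := by
  induction l generalizing w with
  | nil => exact h.P_mul_P w
  | cons f t ih =>
    rw [h.sPath_cons, pathEnd_cons, mul_assoc, ih (isPathFrom_cons.1 hl).2]

theorem star_sPath_mul_sPath (h : IsTCKFamily r s P S) {w : V} {l : List Ed}
    (hl : IsPathFrom r s w l) : star (sPath P S w l) * sPath P S w l = P (pathEnd r w l) := by
  induction l generalizing w with
  | nil => simp [sPath, pathEnd, h.star_P w, h.P_mul_P w]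
  | cons f t ih =>
    have ht := (isPathFrom_cons.1 hl).2
    rw [h.sPath_cons, pathEnd_cons, star_mul, mul_assoc, ← mul_assoc (star (S f)),
      h.star_S_mul_S, h.P_mul_sPath ht, ih ht]

theorem sPath_mem (h : IsTCKFamily r s P S) {A : NonUnitalStarSubalgebra ℂ (H →L[ℂ] H)}
    (hS : ∀ f, S f ∈ A) (hP : ∀ v, P v ∈ A) (w : V) (l : List Ed) : sPath P S w l ∈ A := by
  induction l generalizing w with
  | nil => exact hP w
  | cons f t ih => rw [h.sPath_cons]; exact mul_mem (hS f) (ih (r f))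

theorem P_mem_reachableMonomials (h : IsTCKFamily r s P S) (v : V) :
    P v ∈ reachableMonomials r s P S v := by
  refine ⟨v, [], v, [], isPathFrom_nil v, isPathFrom_nil v, rfl, .refl v, ?_⟩
  simp only [sPath, h.star_P v, h.P_mul_P v]

theorem S_mul_mem_reachableMonomials (h : IsTCKFamily r s P S) (f : Ed) {v : V}
    {x : H →L[ℂ] H} (hx : x ∈ reachableMonomials r s P S v) :
    S f * x = 0 ∨ S f * x ∈ reachableMonomials r s P S v := by
  obtain ⟨vμ, lμ, vτ, lτ, hμ, hτ, hend, hreach, rfl⟩ := hx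
  by_cases hf : r f = vμ
  · subst hf
    refine .inr ⟨s f, f :: lμ, vτ, lτ, isPathFrom_cons.2 ⟨rfl, hμ⟩, hτ, ?_, ?_, ?_⟩
    · rwa [pathEnd_cons]
    · rwa [pathEnd_cons]
    · rw [h.sPath_cons, mul_assoc]
  · exact .inl (by rw [← mul_assoc, h.S_mul_sPath_of_ne hμ hf, zero_mul])

theorem star_S_mul_mem_reachableMonomials (h : IsTCKFamily r s P S) (f : Ed) {v : V}
    {x : H →L[ℂ] H} (hx : x ∈ reachableMonomials r s P S v) :
    star (S f) * x = 0 ∨ star (S f) * x ∈ reachableMonomials r s P S v := by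
  obtain ⟨vμ, lμ, vτ, lτ, hμ, hτ, hend, hreach, rfl⟩ := hx
  cases lμ with
  | nil =>
    change star (S f) * (P vμ * _) = 0 ∨ star (S f) * (P vμ * _) ∈ _
    by_cases hf : vμ = s f
    · subst hf
      have hτf : pathEnd r vτ lτ = s f := hend.symm
      refine .inr ⟨r f, [], vτ, lτ ++ [f], isPathFrom_nil _, hτ.append_singleton hτf,
        (pathEnd_append_singleton (r := r) vτ lτ f).symm, hreach.range, ?_⟩
      change _ = P (r f) * _
      rw [h.sPath_append_singleton hτf, star_mul, ← mul_assoc, h.star_S_mul_P, ← mul_assoc,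
        h.P_mul_star_S]
    · refine .inl ?_
      rw [← mul_assoc, ← h.star_S_mul_P f, mul_assoc _ (P (s f)), h.P_mul_P_of_ne (Ne.symm hf),
        mul_zero, zero_mul]
  | cons g t =>
    obtain ⟨rfl, ht⟩ := isPathFrom_cons.1 hμ
    rw [pathEnd_cons] at hend hreach
    rw [h.sPath_cons, ← mul_assoc, ← mul_assoc]
    by_cases hfg : f = g
    · subst hfg
      refine .inr ⟨r f, t, vτ, lτ, ht, hτ, hend, hreach, ?_⟩
      rw [h.star_S_mul_S, h.P_mul_sPath ht]
    · exact .inl (by rw [h.star_S_mul_S_of_ne hfg, zero_mul, zero_mul])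

theorem P_mul_mem_reachableMonomials (h : IsTCKFamily r s P S) (u : V) {v : V}
    {x : H →L[ℂ] H} (hx : x ∈ reachableMonomials r s P S v) :
    P u * x = 0 ∨ P u * x ∈ reachableMonomials r s P S v := by
  obtain ⟨vμ, lμ, vτ, lτ, hμ, hτ, hend, hreach, rfl⟩ := hx
  rw [← mul_assoc]
  by_cases hu : u = vμ
  · subst hu
    exact .inr ⟨u, lμ, vτ, lτ, hμ, hτ, hend, hreach, by rw [h.P_mul_sPath hμ]⟩
  · exact .inl (by rw [h.P_mul_sPath_of_ne hμ hu, zero_mul])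

theorem adjoin_le_starIdealizer (h : IsTCKFamily r s P S) (v : V) :
    NonUnitalStarAlgebra.adjoin ℂ (Set.range S ∪ Set.range P) ≤
      (Submodule.span ℂ (reachableMonomials r s P S v)).starIdealizer := by
  have hspan {a : H →L[ℂ] H}
      (ha : ∀ x ∈ reachableMonomials r s P S v, a * x = 0 ∨ a * x ∈ reachableMonomials r s P S v)
      (x) (hx : x ∈ reachableMonomials r s P S v) :
      a * x ∈ Submodule.span ℂ (reachableMonomials r s P S v) :=
    (ha x hx).elim (fun h0 => h0 ▸ zero_mem _) (fun h1 => Submodule.subset_span h1)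
  refine NonUnitalStarAlgebra.adjoin_le ?_
  rintro _ (⟨f, rfl⟩ | ⟨u, rfl⟩)
  · exact Submodule.mem_starIdealizer_span (hspan fun _ => h.S_mul_mem_reachableMonomials f)
      (hspan fun _ => h.star_S_mul_mem_reachableMonomials f)
  · have hPu := hspan fun _ => h.P_mul_mem_reachableMonomials u
    exact Submodule.mem_starIdealizer_span hPu (by rwa [h.star_P u])

theorem topologicalClosure_adjoin_le_starIdealizer (h : IsTCKFamily r s P S) (v : V) :
    (NonUnitalStarAlgebra.adjoin ℂ (Set.range S ∪ Set.range P)).topologicalClosure ≤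
      (Submodule.span ℂ (reachableMonomials r s P S v)).topologicalClosure.starIdealizer :=
  NonUnitalStarSubalgebra.topologicalClosure_minimal _ ((h.adjoin_le_starIdealizer v).trans
    (Submodule.starIdealizer_le_starIdealizer_topologicalClosure _))
    (Submodule.isClosed_starIdealizer (Submodule.isClosed_topologicalClosure _))

theorem exists_mul_P_mul_of_mem_reachableMonomials (h : IsTCKFamily r s P S)
    {A : NonUnitalStarSubalgebra ℂ (H →L[ℂ] H)} (hS : ∀ f, S f ∈ A) (hP : ∀ v, P v ∈ A)
    {v : V} {x : H →L[ℂ] H} (hx : x ∈ reachableMonomials r s P S v) :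
    ∃ a ∈ A, ∃ b ∈ A, x = a * P v * b := by
  obtain ⟨vμ, lμ, vτ, lτ, hμ, hτ, -, ⟨l, hl, hlend⟩, rfl⟩ := hx
  have hmem := h.sPath_mem hS hP
  refine ⟨sPath P S vμ lμ * star (sPath P S v l), mul_mem (hmem _ _) (star_mem (hmem _ _)),
    sPath P S v l * star (sPath P S vτ lτ), mul_mem (hmem _ _) (star_mem (hmem _ _)), ?_⟩
  calc sPath P S vμ lμ * star (sPath P S vτ lτ)
      = sPath P S vμ lμ * P (pathEnd r vμ lμ) * star (sPath P S vτ lτ) := by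
        rw [h.sPath_mul_P_pathEnd hμ]
    _ = sPath P S vμ lμ * (star (sPath P S v l) * (P v * sPath P S v l)) *
          star (sPath P S vτ lτ) := by
        rw [h.P_mul_sPath hl, h.star_sPath_mul_sPath hl, hlend]
    _ = _ := by simp only [mul_assoc]

theorem reachableMonomials_subset (h : IsTCKFamily r s P S)
    {A : NonUnitalStarSubalgebra ℂ (H →L[ℂ] H)} (hS : ∀ f, S f ∈ A) (hP : ∀ v, P v ∈ A)
    (v : V) : reachableMonomials r s P S v ⊆ A := fun _ hx => by
  obtain ⟨a, ha, b, hb, rfl⟩ := h.exists_mul_P_mul_of_mem_reachableMonomials hS hP hx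
  exact mul_mem (mul_mem ha (hP v)) hb

theorem mem_twoSidedIdealSpan_of_mem_reachableMonomials (h : IsTCKFamily r s P S)
    {A : NonUnitalStarSubalgebra ℂ (H →L[ℂ] H)} (hS : ∀ f, S f ∈ A) (hP : ∀ v, P v ∈ A)
    {v : V} {p : A} (hp : (p : H →L[ℂ] H) = P v) {y : A}
    (hy : (y : H →L[ℂ] H) ∈ reachableMonomials r s P S v) : y ∈ TwoSidedIdeal.span {p} := by
  obtain ⟨a, ha, b, hb, hab⟩ := h.exists_mul_P_mul_of_mem_reachableMonomials hS hP hy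
  have hy : y = ⟨a, ha⟩ * p * ⟨b, hb⟩ := Subtype.ext (by rw [hab, ← hp]; rfl)
  rw [hy]
  exact TwoSidedIdeal.mul_mem_right _ _ _
    (TwoSidedIdeal.mul_mem_left _ _ _ (TwoSidedIdeal.subset_span rfl))

end IsTCKFamily

/-- Let `{S_f, P_v}` be a Toeplitz–Cuntz–Krieger `E`-family on `H` and `v` a vertex.  Inside
`C*(S, P)` (the smallest norm-closed *-subalgebra of `B(H)` containing the family), the
closed two-sided ideal generated by `P_v` (the closure of the algebraic two-sided ideal it
generates) equals the closed linear span of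
`{S_μ S_τ* : μ, τ paths with r(μ) = r(τ) ∈ H(v)}`, where `H(v)` is the set of vertices
reachable from `v` by a (possibly trivial) path. -/
theorem ideal_generated_by_Pv
    {V Ed : Type*} {H : Type*} [NormedAddCommGroup H] [InnerProductSpace ℂ H]
    [CompleteSpace H]
    {r s : Ed → V} {P : V → (H →L[ℂ] H)} {S : Ed → (H →L[ℂ] H)}
    (hTCK : IsTCKFamily r s P S) (v : V)
    (pv : (NonUnitalStarAlgebra.adjoin ℂ (Set.range S ∪ Set.range P)).topologicalClosure)
    (hpv : (pv : H →L[ℂ] H) = P v) :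
    closure ((TwoSidedIdeal.span {pv} : TwoSidedIdeal
        ((NonUnitalStarAlgebra.adjoin ℂ (Set.range S ∪ Set.range P)).topologicalClosure)) :
      Set ((NonUnitalStarAlgebra.adjoin ℂ (Set.range S ∪ Set.range P)).topologicalClosure)) =
    closure ((Submodule.span ℂ
        {x : (NonUnitalStarAlgebra.adjoin ℂ (Set.range S ∪ Set.range P)).topologicalClosure |
          ∃ (vμ : V) (lμ : List Ed) (vτ : V) (lτ : List Ed),
            IsPathFrom r s vμ lμ ∧ IsPathFrom r s vτ lτ ∧
            pathEnd r vμ lμ = pathEnd r vτ lτ ∧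
            (∃ l : List Ed, IsPathFrom r s v l ∧ pathEnd r v l = pathEnd r vμ lμ) ∧
            (x : H →L[ℂ] H) = sPath P S vμ lμ * star (sPath P S vτ lτ)}) :
      Set ((NonUnitalStarAlgebra.adjoin ℂ (Set.range S ∪ Set.range P)).topologicalClosure)) := by
  set X := reachableMonomials r s P S v
  have hgen : Set.range S ∪ Set.range P ⊆
      (NonUnitalStarAlgebra.adjoin ℂ (Set.range S ∪ Set.range P)).topologicalClosure :=
    (NonUnitalStarAlgebra.subset_adjoin ℂ _).trans
      (NonUnitalStarSubalgebra.le_topologicalClosure _)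
  have hS (f : Ed) := hgen (.inl ⟨f, rfl⟩)
  have hP (u : V) := hgen (.inr ⟨u, rfl⟩)
  change closure _ = closure ((Submodule.span ℂ (((↑) :
    (NonUnitalStarAlgebra.adjoin ℂ (Set.range S ∪ Set.range P)).topologicalClosure →
      H →L[ℂ] H) ⁻¹' X)) :
    Set (NonUnitalStarAlgebra.adjoin ℂ (Set.range S ∪ Set.range P)).topologicalClosure)
  apply Set.Subset.antisymm
  · rw [NonUnitalStarSubalgebra.closure_span_preimage_val _
      (hTCK.reachableMonomials_subset hS hP v), ← Submodule.topologicalClosure_coe]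
    refine closure_minimal (NonUnitalStarSubalgebra.twoSidedIdealSpan_subset_preimage_val
      (fun _ => Submodule.star_mem_topologicalClosure_span fun _ => star_mem_reachableMonomials)
      (hTCK.topologicalClosure_adjoin_le_starIdealizer v) ?_)
      ((Submodule.isClosed_topologicalClosure _).preimage continuous_subtype_val)
    rintro _ rfl
    exact Submodule.le_topologicalClosure _
      (Submodule.subset_span (hpv ▸ hTCK.P_mem_reachableMonomials v))
  · have hpv_idem : IsIdempotentElem pv :=
      Subtype.ext (by simp only [NonUnitalStarSubalgebra.coe_mul, hpv, hTCK.P_mul_P v])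
    exact closure_mono (TwoSidedIdeal.span_submodule_subset_span_singleton hpv_idem
      fun y hy => hTCK.mem_twoSidedIdealSpan_of_mem_reachableMonomials hS hP hpv hy)
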